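/- Let G consist of p disjoint chains C₁,…,C_p with integer node costs. The schedule obtained by decomposing each chain into humps and concatenating all humps in standard order (negative-cost humps first in nondecreasing order of height, then nonnegative-cost humps in nonincreasing order of reverse height, with humps from the same chain kept in their chain order) is an optimal schedule of G, i.e., it attains the minimum height over all schedules of G. -/

import Mathlib

/-!
In any schedule, consider the moment at which the peak of a hump is scheduled. In each chain,
the nodes scheduled so far cover some humps whose peak has been passed, each contributing at
least its cost (past its peak, the prefix sums of a hump stay at or above its cost), and at most
one more hump, cut before its peak, contributing a nonnegative amount. Hence the schedule is at
least as high as the concatenation of all humps in the order in which their peaks are reached.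
Among concatenations of the humps the standard order is the lowest: moving an adjacent pair
into standard order never raises the height, so sorting into standard order only lowers it.
-/

def cost (L : List ℤ) : ℤ := L.sum

def height (L : List ℤ) : ℤ :=
  ((List.range (L.length + 1)).map fun k => (L.take k).sum).foldr max 0

def fall (L : List ℤ) : ℤ := height L - cost L

variable {p : ℕ}

/-- Realize a word of chain indices as the sequence of node costs obtained by,
at each step, consuming the next unused node of the indicated chain. -/
def realize (C : Fin p → List ℤ) : List (Fin p) → List ℤ
  | [] => []
  | i :: w => (C i).headD 0 :: realize (Function.update C i (C i).tail) w

/-- A schedule of the chain graph `C`: a word using each chain exactly up to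
its length (a linear extension, realized chainwise). -/
def IsSched (C : Fin p → List ℤ) (w : List (Fin p)) : Prop :=
  ∀ i, w.count i = (C i).length

/-- A subschedule: a prefix of some schedule. -/
def IsSub (C : Fin p → List ℤ) (w : List (Fin p)) : Prop :=
  ∀ i, w.count i ≤ (C i).length

/-- positions in `u` at which chain `i` is scheduled. -/
def occIdx (u : List (Fin p)) (i : Fin p) : List ℕ :=
  (List.range u.length).filter fun t => decide (u[t]? = some i)

/-- In the word `u`, node number `a` (0-based) of chain `i` occurs before node
number `b` of chain `j`. -/
def Precedes (u : List (Fin p)) (i : Fin p) (a : ℕ) (j : Fin p) (b : ℕ) : Prop :=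
  ∃ s t, (occIdx u i)[a]? = some s ∧ (occIdx u j)[b]? = some t ∧ s < t

/-- A subschedule is valid when, at every prefix, the number of `P` operations
(+1) does not exceed the number of `V` operations (−1). -/
def ValidWord (C : Fin p → List ℤ) (u : List (Fin p)) : Prop :=
  ∀ t, ((realize C u).take t).sum ≤ 0

/-- `H` is a hump: it has a useful peak at index `k`. -/
def IsHump (H : List ℤ) : Prop :=
  H ≠ [] ∧ ∃ k < H.length,
    (∀ m < H.length, (H.take (m + 1)).sum ≤ (H.take (k + 1)).sum) ∧
    (∀ m < k, 0 ≤ (H.take (m + 1)).sum) ∧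
    (∀ m, k < m → m < H.length → cost H ≤ (H.take (m + 1)).sum)

/-- Monotonicity property of the canonical hump decomposition. -/
def StdMono (H₁ H₂ : List ℤ) : Prop :=
  (0 ≤ cost H₁ → 0 ≤ cost H₂ ∧ fall H₂ < fall H₁) ∧
  (cost H₂ < 0 → cost H₁ < 0 ∧ height H₁ < height H₂)

/-- `D` is the canonical hump decomposition of `C`. -/
def IsDecomp (C : List ℤ) (D : List (List ℤ)) : Prop :=
  D.flatten = C ∧ (∀ H ∈ D, IsHump H) ∧ D.Pairwise StdMono ∧
    List.Chain' (fun H₁ H₂ => ¬ IsHump (H₁ ++ H₂)) D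

/-- `StandardPair B A` : the series `B A` (with `B` first) is in standard order. -/
def StandardPair (B A : List ℤ) : Prop :=
  (cost B < 0 ∧ cost A < 0 ∧ height B ≤ height A) ∨
  (0 ≤ cost B ∧ 0 ≤ cost A ∧ fall A ≤ fall B) ∨
  (cost B < 0 ∧ 0 ≤ cost A)

theorem List.foldr_max_le_iff {α : Type*} [LinearOrder α] {l : List α} {b c : α} :
    l.foldr max b ≤ c ↔ b ≤ c ∧ ∀ a ∈ l, a ≤ c := by
  induction l with
  | nil => simp
  | cons x l ih => simp only [List.foldr_cons, max_le_iff, ih, List.forall_mem_cons]; tauto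

theorem List.sum_take_add_one_eq_add_getD {M : Type*} [AddMonoid M] (L : List M) (n : ℕ) :
    (L.take (n + 1)).sum = (L.take n).sum + L.getD n 0 := by
  induction L generalizing n with
  | nil => simp
  | cons a L ih => cases n <;> simp [List.take_succ_cons, ih, add_assoc]

theorem List.count_concat_eq_add_ite {α : Type*} [DecidableEq α] (u : List α) (i j : α) :
    (u ++ [i]).count j = u.count j + if j = i then 1 else 0 := by
  rcases eq_or_ne j i with rfl | h
  · simp
  · simp [List.count_append, h, h.symm]

theorem Multiset.coe_flatten_ofFn {α : Type*} {n : ℕ} (f : Fin n → List α) :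
    ((List.ofFn f).flatten : Multiset α) = ∑ i, (f i : Multiset α) := by
  rw [← Multiset.coe_join, List.map_ofFn, Multiset.join, Multiset.sum_coe, List.sum_ofFn]
  rfl

theorem height_le_iff {L : List ℤ} {b : ℤ} : height L ≤ b ↔ 0 ≤ b ∧ ∀ t, (L.take t).sum ≤ b := by
  simp only [height, List.foldr_max_le_iff, List.forall_mem_map, List.mem_range, Nat.lt_succ_iff]
  refine and_congr_right fun _ => ⟨fun h t => ?_, fun h t _ => h t⟩
  rcases le_total t L.length with ht | ht
  · exact h t ht
  · simpa [List.take_of_length_le ht] using h _ le_rfl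

theorem height_nonneg (L : List ℤ) : 0 ≤ height L := (height_le_iff.1 le_rfl).1

theorem sum_take_le_height (L : List ℤ) (t : ℕ) : (L.take t).sum ≤ height L :=
  (height_le_iff.1 le_rfl).2 t

theorem sum_le_height (L : List ℤ) : L.sum ≤ height L := by
  simpa using sum_take_le_height L L.length

theorem height_append (L M : List ℤ) : height (L ++ M) = max (height L) (cost L + height M) := by
  refine eq_of_forall_ge_iff fun b => ?_
  have hM : cost L + height M ≤ b ↔ height M ≤ b - cost L := by constructor <;> intro <;> linarith
  simp only [max_le_iff, hM, height_le_iff, List.take_append, List.sum_append]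
  constructor
  · rintro ⟨hb, h⟩
    have hL := h L.length
    simp only [List.take_length, Nat.sub_self, List.take_zero, List.sum_nil, add_zero] at hL
    refine ⟨⟨hb, fun t => ?_⟩, by simpa [cost] using hL, fun t => ?_⟩
    · rcases le_total t L.length with ht | ht
      · simpa [Nat.sub_eq_zero_of_le ht] using h t
      · rwa [List.take_of_length_le ht]
    · have := h (L.length + t)
      simp only [List.take_of_length_le (Nat.le_add_right _ _), Nat.add_sub_cancel_left] at this
      simp only [cost]; linarith
  · rintro ⟨⟨hb, hL⟩, -, hMb⟩
    refine ⟨hb, fun t => ?_⟩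
    rcases le_total t L.length with ht | ht
    · simpa [Nat.sub_eq_zero_of_le ht] using hL t
    · rw [List.take_of_length_le ht]
      have := hMb (t - L.length)
      simp only [cost] at this; linarith

theorem height_append_le_append_right (L : List ℤ) {M M' : List ℤ} (h : height M ≤ height M') :
    height (L ++ M) ≤ height (L ++ M') := by
  rw [height_append, height_append]
  exact max_le_max le_rfl (by linarith)

theorem height_append_le_append_left {L L' : List ℤ} (M : List ℤ) (hc : cost L = cost L')
    (h : height L ≤ height L') : height (L ++ M) ≤ height (L' ++ M) := by
  rw [height_append, height_append, hc]
  exact max_le_max h le_rfl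

theorem height_append_le_of_standardPair {B A : List ℤ} (h : StandardPair B A) :
    height (B ++ A) ≤ height (A ++ B) := by
  have := height_nonneg A
  have := height_nonneg B
  rw [height_append, height_append]
  rcases h with ⟨hB, -, h⟩ | ⟨-, hA, h⟩ | ⟨hB, hA⟩
  · exact max_le (le_max_of_le_left h) (le_max_of_le_left (by linarith))
  · simp only [fall] at h
    exact max_le (le_max_of_le_right (by linarith)) (le_max_of_le_right (by linarith))
  · exact max_le (le_max_of_le_right (by linarith)) (le_max_of_le_left (by linarith))

section Exchange

variable {r : List ℤ → List ℤ → Prop}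

theorem height_append_flatten_le_of_forall {A : List ℤ}
    (hr : ∀ {B A}, r B A → height (B ++ A) ≤ height (A ++ B)) :
    ∀ {M₁ : List (List ℤ)} (M₂ : List (List ℤ)), (∀ X ∈ M₁, r A X) →
      height (A ++ (M₁ ++ M₂).flatten) ≤ height (M₁ ++ A :: M₂).flatten
  | [], _, _ => by simp
  | X :: M₁, M₂, hA => calc
      height (A ++ (X :: M₁ ++ M₂).flatten) = height (A ++ X ++ (M₁ ++ M₂).flatten) := by simp
      _ ≤ height (X ++ A ++ (M₁ ++ M₂).flatten) :=
        height_append_le_append_left _ (by simp [cost, add_comm]) (hr (hA X (by simp)))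
      _ ≤ height (X ++ (M₁ ++ A :: M₂).flatten) := by
        rw [List.append_assoc]
        exact height_append_le_append_right X
          (height_append_flatten_le_of_forall hr M₂ fun Y hY => hA Y (by simp [hY]))
      _ = height (X :: M₁ ++ A :: M₂).flatten := by simp

theorem height_flatten_le_of_perm (hr : ∀ {B A}, r B A → height (B ++ A) ≤ height (A ++ B)) :
    ∀ {L M : List (List ℤ)}, L.Pairwise r → L.Perm M → height L.flatten ≤ height M.flatten
  | [], _, _, h => by rw [h.symm.eq_nil]
  | A :: L, M, hL, h => by
    obtain ⟨M₁, M₂, rfl⟩ := List.append_of_mem (h.subset List.mem_cons_self)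
    have h' : L.Perm (M₁ ++ M₂) := (h.trans List.perm_middle).cons_inv
    rw [List.pairwise_cons] at hL
    calc height (A :: L).flatten = height (A ++ L.flatten) := by simp
      _ ≤ height (A ++ (M₁ ++ M₂).flatten) :=
        height_append_le_append_right A (height_flatten_le_of_perm hr hL.2 h')
      _ ≤ height (M₁ ++ A :: M₂).flatten :=
        height_append_flatten_le_of_forall hr M₂ fun X hX => hL.1 X (h'.symm.subset (by simp [hX]))

end Exchange

def IsPeak (H : List ℤ) (k : ℕ) : Prop :=
  k < H.length ∧
    (∀ m < H.length, (H.take (m + 1)).sum ≤ (H.take (k + 1)).sum) ∧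
    (∀ m < k, 0 ≤ (H.take (m + 1)).sum) ∧
    (∀ m, k < m → m < H.length → cost H ≤ (H.take (m + 1)).sum)

theorem IsHump.exists_isPeak {H : List ℤ} (h : IsHump H) : ∃ k, IsPeak H k := h.2

namespace IsPeak

variable {H : List ℤ} {k c : ℕ}

theorem sum_take_nonneg (h : IsPeak H k) (hc : c ≤ k) : 0 ≤ (H.take c).sum := by
  rcases c with _ | m
  · simp
  · exact h.2.2.1 m (by omega)

theorem cost_le_sum_take (h : IsPeak H k) (hc : k < c) : cost H ≤ (H.take c).sum := by
  obtain ⟨hk, hmax, -, hpost⟩ := h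
  rcases le_or_gt H.length c with hl | hl
  · rw [List.take_of_length_le hl, cost]
  obtain ⟨m, rfl⟩ : ∃ m, c = m + 1 := ⟨c - 1, by omega⟩
  rcases (Nat.lt_succ_iff.1 hc).lt_or_eq with hkm | rfl
  · exact hpost m hkm (by omega)
  · simpa [Nat.sub_add_cancel (show 1 ≤ H.length by omega), cost] using
      hmax (H.length - 1) (by omega)

theorem height_le (h : IsPeak H k) : height H ≤ max 0 (H.take (k + 1)).sum := by
  refine height_le_iff.2 ⟨le_max_left _ _, fun t => ?_⟩
  rcases t with _ | m
  · simp
  refine le_max_of_le_right ?_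
  rcases lt_or_ge m H.length with hm | hm
  · exact h.2.1 m hm
  · rw [List.take_of_length_le (by omega)]
    exact h.cost_le_sum_take k.lt_succ_self

end IsPeak

section Reached

variable (k : List ℤ → ℕ)

/-- With `k H` the offset of the peak of each hump `H`, `reached k Hs c` lists the humps of the
chain `Hs.flatten` whose peak lies among its first `c` nodes. -/
def reached : List (List ℤ) → ℕ → List (List ℤ)
  | [], _ => []
  | H :: T, c => if k H < c then H :: reached T (c - H.length) else []

@[simp] theorem reached_zero (Hs : List (List ℤ)) : reached k Hs 0 = [] := by
  cases Hs <;> simp [reached]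

variable {k}

theorem reached_of_length_le :
    ∀ {Hs : List (List ℤ)} {c : ℕ}, (∀ H ∈ Hs, IsPeak H (k H)) → Hs.flatten.length ≤ c →
      reached k Hs c = Hs
  | [], _, _, _ => rfl
  | H :: T, c, hk, hc => by
    have hH := (hk H List.mem_cons_self).1
    simp only [List.flatten_cons, List.length_append] at hc
    rw [reached, if_pos (by omega),
      reached_of_length_le (fun H' h' => hk H' (List.mem_cons_of_mem _ h')) (by omega)]

theorem cost_flatten_reached_le :
    ∀ {Hs : List (List ℤ)} (c : ℕ), (∀ H ∈ Hs, IsPeak H (k H)) →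
      cost (reached k Hs c).flatten ≤ (Hs.flatten.take c).sum
  | [], _, _ => by simp [reached, cost]
  | H :: T, c, hk => by
    have hH := hk H List.mem_cons_self
    have hT := cost_flatten_reached_le (c - H.length) fun H' h' => hk H' (List.mem_cons_of_mem _ h')
    rw [reached, List.flatten_cons, List.take_append, List.sum_append]
    split_ifs with hc
    · simp only [List.flatten_cons, cost, List.sum_append] at hT ⊢
      linarith [show H.sum ≤ _ from hH.cost_le_sum_take hc]
    · rw [Nat.sub_eq_zero_of_le (by have := hH.1; omega)]
      simpa [cost] using hH.sum_take_nonneg (not_lt.1 hc)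

theorem reached_succ :
    ∀ {Hs : List (List ℤ)} (c : ℕ), (∀ H ∈ Hs, IsPeak H (k H)) →
      reached k Hs (c + 1) = reached k Hs c ∨
        ∃ H ∈ Hs, reached k Hs (c + 1) = reached k Hs c ++ [H] ∧
          cost (reached k Hs c).flatten + (H.take (k H + 1)).sum ≤ (Hs.flatten.take (c + 1)).sum
  | [], _, _ => Or.inl rfl
  | H :: T, c, hk => by
    have hkH : k H < H.length := (hk H List.mem_cons_self).1
    have hT : ∀ H' ∈ T, IsPeak H' (k H') := fun H' h' => hk H' (List.mem_cons_of_mem _ h')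
    rcases lt_trichotomy c (k H) with hc | rfl | hc
    · left
      simp [reached, show ¬ k H < c + 1 by omega, show ¬ k H < c by omega]
    · right
      have h₀ : k H + 1 - H.length = 0 := by omega
      refine ⟨H, List.mem_cons_self, ?_, ?_⟩
      · simp [reached, h₀]
      · simp [reached, cost, List.take_append, h₀]
    · rcases lt_or_ge c H.length with hl | hl
      · left
        simp [reached, hc, show k H < c + 1 by omega, show c + 1 - H.length = 0 by omega,
          show c - H.length = 0 by omega]
      have hc' : c + 1 - H.length = c - H.length + 1 := by omega
      rw [reached, reached, if_pos (by omega), if_pos hc, hc']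
      rcases reached_succ (c - H.length) hT with h | ⟨H', hH', h, hle⟩
      · exact Or.inl (by rw [h])
      · refine Or.inr ⟨H', List.mem_cons_of_mem _ hH', by rw [h]; rfl, ?_⟩
        have hH : H.take (c + 1) = H := List.take_of_length_le (by omega)
        simp only [List.flatten_cons, List.take_append, hH, hc', cost, List.sum_append] at hle ⊢
        linarith

end Reached

theorem realize_concat (C : Fin p → List ℤ) (u : List (Fin p)) (i : Fin p) :
    realize C (u ++ [i]) = realize C u ++ [(C i).getD (u.count i) 0] := by
  induction u generalizing C with
  | nil => cases h : C i <;> simp [realize, h]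
  | cons j u ih =>
    simp only [List.cons_append, realize, ih, List.count_cons]
    rcases eq_or_ne i j with rfl | hij
    · cases C i <;> simp
    · simp [hij, Ne.symm hij]

theorem sum_realize (C : Fin p → List ℤ) (u : List (Fin p)) :
    (realize C u).sum = ∑ i, ((C i).take (u.count i)).sum := by
  induction u using List.reverseRecOn with
  | nil => simp [realize]
  | append_singleton u i ih =>
    have hstep : ∀ j, ((C j).take ((u ++ [i]).count j)).sum
        = ((C j).take (u.count j)).sum + if j = i then (C j).getD (u.count j) 0 else 0 := by
      intro j
      rw [List.count_concat_eq_add_ite]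
      split_ifs with hj
      · rw [hj, List.sum_take_add_one_eq_add_getD]
      · simp
    rw [realize_concat, List.sum_append, ih, Finset.sum_congr rfl fun j _ => hstep j,
      Finset.sum_add_distrib, Finset.sum_ite_eq']
    simp

theorem cost_flatten_eq_sum_of_coe_eq {σ : List (List ℤ)} {f : Fin p → List (List ℤ)}
    (h : (σ : Multiset (List ℤ)) = ∑ i, (f i : Multiset (List ℤ))) :
    cost σ.flatten = ∑ i, cost (f i).flatten := by
  have key : ∀ X : List (List ℤ), cost X.flatten = ((X : Multiset (List ℤ)).map List.sum).sum := by
    intro X; simp [cost, List.sum_flatten]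
  simp only [key, h]
  exact map_sum (Multiset.sumAddMonoidHom.comp (Multiset.mapAddMonoidHom List.sum)) _ _

section Schedule

variable {C : Fin p → List ℤ} {D : Fin p → List (List ℤ)} {k : List ℤ → ℕ}

theorem sum_cost_reached_le_sum_realize (hD : ∀ i, (D i).flatten = C i)
    (hk : ∀ i, ∀ H ∈ D i, IsPeak H (k H)) (u : List (Fin p)) :
    ∑ i, cost (reached k (D i) (u.count i)).flatten ≤ (realize C u).sum := by
  rw [sum_realize]
  exact Finset.sum_le_sum fun i _ => hD i ▸ cost_flatten_reached_le _ (hk i)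

theorem sum_cost_reached_add_le_sum_realize_concat (hD : ∀ i, (D i).flatten = C i)
    (hk : ∀ i, ∀ H ∈ D i, IsPeak H (k H)) {u : List (Fin p)} {i : Fin p} {a : ℤ}
    (ha : cost (reached k (D i) (u.count i)).flatten + a ≤ ((C i).take (u.count i + 1)).sum) :
    ∑ j, cost (reached k (D j) (u.count j)).flatten + a ≤ (realize C (u ++ [i])).sum := by
  rw [sum_realize]
  calc ∑ j, cost (reached k (D j) (u.count j)).flatten + a
      = ∑ j, (cost (reached k (D j) (u.count j)).flatten + if j = i then a else 0) := by
        simp [Finset.sum_add_distrib]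
    _ ≤ _ := Finset.sum_le_sum fun j _ => ?_
  rw [List.count_concat_eq_add_ite]
  split_ifs with hj
  · exact hj ▸ ha
  · simpa [hD j] using cost_flatten_reached_le (u.count j) (hk j)

theorem exists_coe_eq_reached_and_height_le (hD : ∀ i, (D i).flatten = C i)
    (hk : ∀ i, ∀ H ∈ D i, IsPeak H (k H)) (u : List (Fin p)) :
    ∃ σ : List (List ℤ), (σ : Multiset (List ℤ)) = ∑ i, ↑(reached k (D i) (u.count i)) ∧
      height σ.flatten ≤ height (realize C u) := by
  induction u using List.reverseRecOn with
  | nil => exact ⟨[], by simp, by simpa [height] using height_nonneg _⟩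
  | append_singleton u i ih =>
    obtain ⟨σ, hσ, hle⟩ := ih
    have hmono : height (realize C u) ≤ height (realize C (u ++ [i])) := by
      rw [realize_concat, height_append]
      exact le_max_left _ _
    rcases reached_succ (u.count i) (hk i) with hsame | ⟨H, hH, hnew, hpeak⟩
    · refine ⟨σ, hσ.trans (Finset.sum_congr rfl fun j _ => ?_), hle.trans hmono⟩
      rw [List.count_concat_eq_add_ite]
      split_ifs with hj
      · rw [hj, hsame]
      · rfl
    have hstep : ∀ j, reached k (D j) ((u ++ [i]).count j)
        = reached k (D j) (u.count j) ++ if j = i then [H] else [] := by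
      intro j
      rw [List.count_concat_eq_add_ite]
      split_ifs with hj
      · rw [hj, hnew]
      · simp
    refine ⟨σ ++ [H], ?_, ?_⟩
    · rw [← Multiset.coe_add, hσ]
      simp only [hstep, ← Multiset.coe_add, Finset.sum_add_distrib,
        apply_ite ((↑) : List (List ℤ) → Multiset (List ℤ))]
      simp
    have hpeak' : cost σ.flatten + (H.take (k H + 1)).sum ≤ (realize C (u ++ [i])).sum := by
      rw [cost_flatten_eq_sum_of_coe_eq hσ]
      exact sum_cost_reached_add_le_sum_realize_concat hD hk (hD i ▸ hpeak)
    have hbelow : cost σ.flatten ≤ (realize C u).sum :=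
      (cost_flatten_eq_sum_of_coe_eq hσ).trans_le (sum_cost_reached_le_sum_realize hD hk u)
    rw [List.flatten_append, List.flatten_singleton, height_append]
    refine max_le (hle.trans hmono) ?_
    calc cost σ.flatten + height H ≤ cost σ.flatten + max 0 (H.take (k H + 1)).sum :=
          add_le_add le_rfl (hk i H hH).height_le
      _ = max (cost σ.flatten) (cost σ.flatten + (H.take (k H + 1)).sum) := by
          rw [add_max, add_zero]
      _ ≤ height (realize C (u ++ [i])) :=
          max_le (hbelow.trans ((sum_le_height _).trans hmono)) (hpeak'.trans (sum_le_height _))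

theorem exists_perm_humps_height_le_of_isSched (hD : ∀ i, (D i).flatten = C i)
    (hhump : ∀ i, ∀ H ∈ D i, IsHump H) {w : List (Fin p)} (hw : IsSched C w) :
    ∃ σ : List (List ℤ), σ.Perm (List.ofFn D).flatten ∧
      height σ.flatten ≤ height (realize C w) := by
  choose! k hk using fun H (h : IsHump H) => h.exists_isPeak
  have hk' : ∀ i, ∀ H ∈ D i, IsPeak H (k H) := fun i H hH => hk H (hhump i H hH)
  obtain ⟨σ, hσ, hle⟩ := exists_coe_eq_reached_and_height_le hD hk' w
  refine ⟨σ, Multiset.coe_eq_coe.1 ?_, hle⟩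
  rw [hσ, Multiset.coe_flatten_ofFn]
  refine Finset.sum_congr rfl fun i _ => ?_
  rw [reached_of_length_le (hk' i) (by rw [hD i, hw i])]

end Schedule

theorem merge_optimal_general (C : Fin p → List ℤ) (D : Fin p → List (List ℤ))
    (hD : ∀ i, IsDecomp (C i) (D i))
    (w : List (Fin p)) (blocks : List (List ℤ))
    (hreal : realize C w = blocks.flatten)
    (hperm : blocks.Perm (List.ofFn D).flatten)
    (hstd : blocks.Pairwise StandardPair) :
    ∀ w', IsSched C w' → height (realize C w) ≤ height (realize C w') := by
  intro w' hw'
  obtain ⟨σ, hσ, hle⟩ :=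
    exists_perm_humps_height_le_of_isSched (fun i => (hD i).1) (fun i => (hD i).2.1) hw'
  rw [hreal]
  exact (height_flatten_le_of_perm height_append_le_of_standardPair hstd
    (hperm.trans hσ.symm)).trans hle

/-- Any schedule realizing the concatenation, in standard order, of all the
humps of all the chains is an optimal schedule. -/
theorem merge_optimal (C : Fin p → List ℤ) (D : Fin p → List (List ℤ))
    (hD : ∀ i, IsDecomp (C i) (D i))
    (w : List (Fin p)) (blocks : List (List ℤ))
    (hsch : IsSched C w)
    (hreal : realize C w = blocks.flatten)
    (hperm : blocks.Perm (List.ofFn D).flatten)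
    (hstd : blocks.Pairwise StandardPair) :
    ∀ w', IsSched C w' → height (realize C w) ≤ height (realize C w') :=
  merge_optimal_general C D hD w blocks hreal hperm hstd
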